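/- arXiv:2311.14549 — 2 statements merged into one kernel-verified Lean document; each statement's English description precedes it below -/
import Mathlib

section
/- Quasi-shuffle identity: fix d ≥ 1 and let V be the free ℝ-vector space on the set of all words over letters in ℕ^d (vectors with at least one nonzero entry), including the empty word. There exists an ℝ-bilinear, commutative product ⋆ : V × V → V such that for every T, every d-dimensional real time series x of length T, all 0 ≤ s ≤ t ≤ T, and all φ, ψ ∈ V, one has ⟨φ, ISS_{s,t}(x)⟩ · ⟨ψ, ISS_{s,t}(x)⟩ = ⟨φ ⋆ ψ, ISS_{s,t}(x)⟩, where the ISS pairing is extended ℝ-linearly from words to V and the empty word pairs to 1. -/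
/-- A letter: a vector in `ℕ^d` with at least one nonzero entry. -/
def Letter (d : ℕ) : Type := {a : Fin d → ℕ // ∃ j, a j ≠ 0}

/-- The free ℝ-vector space on the set of all words over letters in `ℕ^d`
(including the empty word). -/
def WordSpace (d : ℕ) : Type := List (Letter d) →₀ ℝ

noncomputable instance (d : ℕ) : AddCommGroup (WordSpace d) :=
  inferInstanceAs (AddCommGroup (List (Letter d) →₀ ℝ))

noncomputable instance (d : ℕ) : Module ℝ (WordSpace d) :=
  inferInstanceAs (Module ℝ (List (Letter d) →₀ ℝ))

/-- The monomial `x_t^{[a]} = ∏_j (x_t^{(j)})^{a_j}`. -/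
def mono {d : ℕ} (x : ℕ → Fin d → ℝ) (t : ℕ) (a : Fin d → ℕ) : ℝ :=
  ∏ j, (x t j) ^ (a j)

/-- The iterated-sums signature coefficient
`⟨[a_1]⋯[a_p], ISS_{s,t}(x)⟩ = ∑_{s < t_1 < ⋯ < t_p ≤ t} x_{t_1}^{[a_1]} ⋯ x_{t_p}^{[a_p]}`,
equal to `1` for the empty word. -/
def iss {d : ℕ} (x : ℕ → Fin d → ℝ) : List (Fin d → ℕ) → ℕ → ℕ → ℝ
  | [], _, _ => 1
  | a :: w, s, t => ∑ i ∈ Finset.Ioc s t, mono x i a * iss x w i t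

/-- The ISS pairing, extended ℝ-linearly from words to the free vector space on words
(the empty word pairs to `1`). -/
noncomputable def pairing {d : ℕ} (φ : WordSpace d) (x : ℕ → Fin d → ℝ)
    (s t : ℕ) : ℝ :=
  Finsupp.sum φ fun w c => c * iss x (w.map Subtype.val) s t


/-!
Expand both iterated sums along their first summation index `t₁`, `t₁'` in `(s, t]`. The
product splits into the regions `t₁ < t₁'`, `t₁' < t₁` and `t₁ = t₁'`; in the first two the
word with the smaller index keeps its first letter and what remains is again a product of
iterated sums over `(t₁, t]`, while on the diagonal `x^{[a]} x^{[b]} = x^{[a+b]}` merges the two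
first letters. This is the recursion of Hoffman's quasi-shuffle of words; its bilinear
extension is commutative because the recursion is symmetric in the two words, letter addition
being commutative.
-/

open Finset

instance (d : ℕ) : AddCommMagma (Letter d) where
  add a b := ⟨a.1 + b.1, by obtain ⟨j, hj⟩ := a.2; exact ⟨j, by simp [hj]⟩⟩
  add_comm a b := Subtype.ext (add_comm a.1 b.1)

lemma Letter.val_add {d : ℕ} (a b : Letter d) : (a + b).1 = a.1 + b.1 := rfl

section QuasiShuffle

variable {A : Type*} (R : Type*)

noncomputable def quasiShuffle [Semiring R] [Add A] : List A → List A → List A →₀ R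
  | [], v => Finsupp.single v 1
  | a :: u, [] => Finsupp.single (a :: u) 1
  | a :: u, b :: v =>
      (quasiShuffle u (b :: v)).mapDomain (a :: ·) + (quasiShuffle (a :: u) v).mapDomain (b :: ·)
        + (quasiShuffle u v).mapDomain ((a + b) :: ·)

lemma quasiShuffle_nil_right [Semiring R] [Add A] (u : List A) :
    quasiShuffle R u [] = Finsupp.single u 1 := by
  cases u <;> rw [quasiShuffle]

lemma quasiShuffle_comm [Semiring R] [AddCommMagma A] (u v : List A) :
    quasiShuffle R u v = quasiShuffle R v u := by
  induction u, v using quasiShuffle.induct with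
  | case1 v => rw [quasiShuffle, quasiShuffle_nil_right]
  | case2 a u => rw [quasiShuffle, quasiShuffle]
  | case3 a u b v ih₁ ih₂ ih₃ =>
    rw [quasiShuffle, quasiShuffle, ih₁, ih₂, ih₃, add_comm a b]
    abel

noncomputable def quasiShuffleProduct [CommSemiring R] [Add A] :
    (List A →₀ R) →ₗ[R] (List A →₀ R) →ₗ[R] List A →₀ R :=
  Finsupp.linearCombination R fun u => Finsupp.linearCombination R (quasiShuffle R u)

lemma quasiShuffleProduct_single_single [CommSemiring R] [Add A] (u v : List A) :
    quasiShuffleProduct R (Finsupp.single u 1) (Finsupp.single v 1) = quasiShuffle R u v := by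
  simp only [quasiShuffleProduct, Finsupp.linearCombination_single, one_smul]

lemma quasiShuffleProduct_comm [CommSemiring R] [AddCommMagma A] (φ ψ : List A →₀ R) :
    quasiShuffleProduct R φ ψ = quasiShuffleProduct R ψ φ := by
  suffices quasiShuffleProduct R = (quasiShuffleProduct R).flip from
    LinearMap.congr_fun₂ this φ ψ
  ext u v : 4
  simp [quasiShuffleProduct_single_single, quasiShuffle_comm R u v]

end QuasiShuffle

lemma Finset.sum_Ioc_mul_sum_Ioc {R : Type*} [CommSemiring R] (f g : ℕ → R) (s t : ℕ) :
    (∑ i ∈ Ioc s t, f i) * (∑ j ∈ Ioc s t, g j)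
      = ∑ i ∈ Ioc s t, f i * ∑ j ∈ Ioc i t, g j
        + ∑ j ∈ Ioc s t, (∑ i ∈ Ioc j t, f i) * g j
        + ∑ i ∈ Ioc s t, f i * g i := by
  have split_row : ∀ i ∈ Ioc s t,
      ∑ j ∈ Ioc s t, f i * g j = ∑ j ∈ Ioc s i, f i * g j + ∑ j ∈ Ioc i t, f i * g j := by
    intro i hi
    rw [mem_Ioc] at hi
    rw [sum_Ioc_consecutive _ hi.1.le hi.2]
  have lower_triangle : ∑ i ∈ Ioc s t, ∑ j ∈ Ioc s i, f i * g j
      = ∑ j ∈ Ioc s t, (f j * g j + ∑ i ∈ Ioc j t, f i * g j) := by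
    rw [sum_comm' (t' := Ioc s t) (s' := fun j => Icc j t)
      (by intro i j; simp only [mem_Ioc, mem_Icc]; omega)]
    refine sum_congr rfl fun j hj => ?_
    rw [Icc_eq_cons_Ioc (mem_Ioc.1 hj).2, sum_cons]
  rw [sum_mul_sum, sum_congr rfl split_row, sum_add_distrib, lower_triangle, sum_add_distrib]
  simp only [← mul_sum, ← sum_mul]
  ring

section IteratedSums

variable {d : ℕ} (x : ℕ → Fin d → ℝ)

lemma mono_add (t : ℕ) (a b : Fin d → ℕ) : mono x t (a + b) = mono x t a * mono x t b := by
  simp only [mono, Pi.add_apply, pow_add, prod_mul_distrib]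

def issWord (w : List (Letter d)) (s t : ℕ) : ℝ :=
  iss x (w.map Subtype.val) s t

lemma issWord_nil (s t : ℕ) : issWord x [] s t = 1 := rfl

lemma issWord_cons (a : Letter d) (w : List (Letter d)) (s t : ℕ) :
    issWord x (a :: w) s t = ∑ i ∈ Ioc s t, mono x i a.1 * issWord x w i t := rfl

noncomputable def pairingLinear (s t : ℕ) : (List (Letter d) →₀ ℝ) →ₗ[ℝ] ℝ :=
  Finsupp.linearCombination ℝ fun w => issWord x w s t

lemma pairingLinear_single (w : List (Letter d)) (c : ℝ) (s t : ℕ) :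
    pairingLinear x s t (Finsupp.single w c) = c * issWord x w s t :=
  Finsupp.linearCombination_single ℝ c w

lemma pairing_eq_pairingLinear (φ : WordSpace d) (s t : ℕ) :
    pairing φ x s t = pairingLinear x s t φ :=
  (Finsupp.linearCombination_apply ℝ φ).symm

lemma pairingLinear_mapDomain_cons (a : Letter d) (φ : List (Letter d) →₀ ℝ) (s t : ℕ) :
    pairingLinear x s t (φ.mapDomain (a :: ·))
      = ∑ i ∈ Ioc s t, mono x i a.1 * pairingLinear x i t φ := by
  induction φ using Finsupp.induction_linear with
  | zero => simp
  | add φ ψ hφ hψ => simp only [Finsupp.mapDomain_add, map_add, hφ, hψ, mul_add, sum_add_distrib]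
  | single w c =>
    rw [Finsupp.mapDomain_single, pairingLinear_single, issWord_cons, mul_sum]
    exact sum_congr rfl fun i _ => by rw [pairingLinear_single, mul_left_comm]

lemma pairingLinear_quasiShuffle (u v : List (Letter d)) (s t : ℕ) :
    pairingLinear x s t (quasiShuffle ℝ u v) = issWord x u s t * issWord x v s t := by
  induction u, v using quasiShuffle.induct generalizing s with
  | case1 v => rw [quasiShuffle, pairingLinear_single, issWord_nil]
  | case2 a u => rw [quasiShuffle_nil_right, pairingLinear_single, issWord_nil, mul_one, one_mul]
  | case3 a u b v ih₁ ih₂ ih₃ =>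
    rw [quasiShuffle, map_add, map_add, pairingLinear_mapDomain_cons,
      pairingLinear_mapDomain_cons, pairingLinear_mapDomain_cons, issWord_cons, issWord_cons,
      sum_Ioc_mul_sum_Ioc]
    simp only [ih₁, ih₂, ih₃, Letter.val_add, mono_add, ← issWord_cons, ← sum_add_distrib]
    exact sum_congr rfl fun i _ => by ring

lemma pairingLinear_mul (s t : ℕ) (φ ψ : List (Letter d) →₀ ℝ) :
    pairingLinear x s t φ * pairingLinear x s t ψ
      = pairingLinear x s t (quasiShuffleProduct ℝ φ ψ) := by
  suffices (LinearMap.mul ℝ ℝ).compl₁₂ (pairingLinear x s t) (pairingLinear x s t)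
      = (quasiShuffleProduct ℝ).compr₂ (pairingLinear x s t) from LinearMap.congr_fun₂ this φ ψ
  ext u v
  simp [quasiShuffleProduct_single_single, pairingLinear_quasiShuffle, pairingLinear_single]

end IteratedSums

theorem exists_quasi_shuffle_product_general (d : ℕ) :
    ∃ star : WordSpace d →ₗ[ℝ] WordSpace d →ₗ[ℝ] WordSpace d,
      (∀ φ ψ : WordSpace d, star φ ψ = star ψ φ) ∧
      ∀ (T : ℕ) (x : ℕ → Fin d → ℝ) (s t : ℕ), s ≤ t → t ≤ T →
        ∀ φ ψ : WordSpace d,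
          pairing φ x s t * pairing ψ x s t = pairing (star φ ψ) x s t := by
  refine ⟨quasiShuffleProduct ℝ, quasiShuffleProduct_comm ℝ, fun T x s t _ _ φ ψ => ?_⟩
  rw [pairing_eq_pairingLinear, pairing_eq_pairingLinear, pairing_eq_pairingLinear]
  exact pairingLinear_mul x s t φ ψ

/-- Quasi-shuffle identity: for `d ≥ 1` there is an ℝ-bilinear, commutative product `⋆`
on the free vector space on words such that
`⟨φ, ISS_{s,t}(x)⟩ · ⟨ψ, ISS_{s,t}(x)⟩ = ⟨φ ⋆ ψ, ISS_{s,t}(x)⟩`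
for all time series `x` of any length `T`, all `0 ≤ s ≤ t ≤ T`, and all `φ, ψ`. -/
theorem exists_quasi_shuffle_product (d : ℕ) (hd : 1 ≤ d) :
    ∃ star : WordSpace d →ₗ[ℝ] WordSpace d →ₗ[ℝ] WordSpace d,
      (∀ φ ψ : WordSpace d, star φ ψ = star ψ φ) ∧
      ∀ (T : ℕ) (x : ℕ → Fin d → ℝ) (s t : ℕ), s ≤ t → t ≤ T →
        ∀ φ ψ : WordSpace d,
          pairing φ x s t * pairing ψ x s t = pairing (star φ ψ) x s t :=
  exists_quasi_shuffle_product_general d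
end

section
/- Inserting a zero value stutters the running ISS: let x be a d-dimensional real time series of length T, let 1 ≤ t_0 ≤ T+1, and let y be the time series of length T+1 with y_i = x_i for i < t_0, y_{t_0} = 0 ∈ ℝ^d, and y_i = x_{i−1} for i > t_0. Then for every word w (all of whose letters have at least one nonzero entry) and every 1 ≤ s ≤ T+1: Itsum_w(y)_s = Itsum_w(x)_s if s < t_0, and Itsum_w(y)_s = Itsum_w(x)_{s−1} if s ≥ t_0. -/
/-!
Every letter is a nonzero multi-index, so its monomial vanishes at the inserted zero: all
summands of the iterated sum for `y` that use time `t₀` drop out, and the remaining time indices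
correspond to those of `x` by shifting the ones after `t₀` down by one.
-/

open Finset

/-- Here `f` is `g` with a zero inserted at position `t₀`. -/
theorem sum_Ioc_insert_zero {M : Type*} [AddCommMonoid M] {f g : ℕ → M} {u t₀ s : ℕ}
    (hu : u < t₀) (hs : t₀ ≤ s + 1) (hlt : ∀ i < t₀, f i = g i) (h0 : f t₀ = 0)
    (hgt : ∀ i, t₀ ≤ i → f (i + 1) = g i) :
    ∑ i ∈ Ioc u (s + 1), f i = ∑ i ∈ Ioc u s, g i := by
  obtain ⟨m, rfl⟩ : ∃ m, t₀ = m + 1 := ⟨t₀ - 1, by omega⟩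
  induction s, (show m ≤ s by omega) using Nat.le_induction with
  | base =>
    rw [sum_Ioc_succ_top (by omega), h0, add_zero]
    exact sum_congr rfl fun i hi => hlt i (by grind)
  | succ s hms ih =>
    rw [sum_Ioc_succ_top (by omega), ih (by omega), hgt _ (by omega), sum_Ioc_succ_top (by omega)]

section

variable {d : ℕ} {x y : ℕ → Fin d → ℝ}

theorem mono_congr {t t' : ℕ} (h : y t = x t') (a : Fin d → ℕ) : mono y t a = mono x t' a := by
  rw [mono, mono, h]

theorem mono_eq_zero_of_eq_zero {t : ℕ} (h : x t = 0) {a : Fin d → ℕ} (ha : ∃ j, a j ≠ 0) :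
    mono x t a = 0 := by
  obtain ⟨j, hj⟩ := ha
  exact prod_eq_zero (mem_univ j) (by simp [h, zero_pow hj])

theorem iss_congr (w : List (Fin d → ℕ)) {u s : ℕ} (h : ∀ i ∈ Ioc u s, y i = x i) :
    iss y w u s = iss x w u s := by
  induction w generalizing u with
  | nil => rfl
  | cons a w ih =>
    refine sum_congr rfl fun i hi => ?_
    rw [mono_congr (h i hi), ih fun j hj => h j (by grind)]

theorem iss_succ_succ (w : List (Fin d → ℕ)) {u s : ℕ} (h : ∀ i ∈ Ioc u s, y (i + 1) = x i) :
    iss y w (u + 1) (s + 1) = iss x w u s := by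
  induction w generalizing u with
  | nil => rfl
  | cons a w ih =>
    rw [iss, iss, ← map_add_right_Ioc, sum_map]
    refine sum_congr rfl fun i hi => ?_
    rw [addRightEmbedding_apply, mono_congr (h i hi), ih fun j hj => h j (by grind)]

theorem iss_insert_zero {t₀ : ℕ} (hlt : ∀ i < t₀, y i = x i) (h0 : y t₀ = 0)
    (hgt : ∀ i, t₀ ≤ i → y (i + 1) = x i) (w : List (Fin d → ℕ))
    (hw : ∀ a ∈ w, ∃ j, a j ≠ 0) {u s : ℕ} (hu : u < t₀) (hs : t₀ ≤ s + 1) :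
    iss y w u (s + 1) = iss x w u s := by
  induction w generalizing u with
  | nil => rfl
  | cons a w ih =>
    have hw' : ∀ b ∈ w, ∃ j, b j ≠ 0 := fun b hb => hw b (List.mem_cons_of_mem a hb)
    refine sum_Ioc_insert_zero hu hs (fun i hi => ?_) ?_ (fun i hi => ?_)
    · rw [mono_congr (hlt i hi), ih hw' hi]
    · rw [mono_eq_zero_of_eq_zero h0 (hw a List.mem_cons_self), zero_mul]
    · rw [mono_congr (hgt i hi), iss_succ_succ w fun j hj => hgt j (by grind)]

end

theorem iss_zero_insertion_stutters_general {d : ℕ} (x y : ℕ → Fin d → ℝ) (t₀ : ℕ)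
    (ht₀1 : 1 ≤ t₀)
    (hy_lt : ∀ i, i < t₀ → y i = x i)
    (hy_eq : y t₀ = 0)
    (hy_gt : ∀ i, t₀ < i → y i = x (i - 1))
    (w : List (Fin d → ℕ)) (hletters : ∀ a ∈ w, ∃ j, a j ≠ 0)
    (s : ℕ) :
    (s < t₀ → iss y w 0 s = iss x w 0 s) ∧
    (t₀ ≤ s → iss y w 0 s = iss x w 0 (s - 1)) := by
  refine ⟨fun hs => iss_congr w fun i hi => hy_lt i (by grind), fun hs => ?_⟩
  obtain ⟨n, rfl⟩ : ∃ n, s = n + 1 := ⟨s - 1, by omega⟩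
  have hy_succ : ∀ i, t₀ ≤ i → y (i + 1) = x i := fun i hi => by
    simpa using hy_gt (i + 1) (by omega)
  exact iss_insert_zero hy_lt hy_eq hy_succ w hletters (by omega) (by omega)

/-- Inserting a zero value stutters the running ISS: if `y` of length `T+1` is
obtained from `x` of length `T` by inserting `0 ∈ ℝ^d` at position `t_0`
(`1 ≤ t_0 ≤ T+1`), then for every word `w` all of whose letters have at least one
nonzero entry and every `1 ≤ s ≤ T+1`: `Itsum_w(y)_s = Itsum_w(x)_s` if `s < t_0`,
and `Itsum_w(y)_s = Itsum_w(x)_{s−1}` if `s ≥ t_0`. -/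
theorem iss_zero_insertion_stutters {d T : ℕ} (x y : ℕ → Fin d → ℝ) (t₀ : ℕ)
    (ht₀1 : 1 ≤ t₀) (ht₀2 : t₀ ≤ T + 1)
    (hy_lt : ∀ i, i < t₀ → y i = x i)
    (hy_eq : y t₀ = 0)
    (hy_gt : ∀ i, t₀ < i → y i = x (i - 1))
    (w : List (Fin d → ℕ)) (hletters : ∀ a ∈ w, ∃ j, a j ≠ 0)
    (s : ℕ) (hs1 : 1 ≤ s) (hs2 : s ≤ T + 1) :
    (s < t₀ → iss y w 0 s = iss x w 0 s) ∧
    (t₀ ≤ s → iss y w 0 s = iss x w 0 (s - 1)) :=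
  iss_zero_insertion_stutters_general x y t₀ ht₀1 hy_lt hy_eq hy_gt w hletters s
end
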